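/- Let s ∈ H_1(K̃_b) be an element with s ∉ θ_{1,b}(H_1(K_b)) + im(ψ_{b−1}). Then s has persistence interval (b, ∞) in H_1(K̃_•). -/

import Mathlib

/-- An abstract simplicial complex on a vertex type `α`: a collection of nonempty
finite subsets of `α` closed under passing to nonempty subsets. -/
structure AbsSC (α : Type) where
  faces : Set (Finset α)
  not_empty_mem : ∅ ∉ faces
  down_closed : ∀ {s t : Finset α}, s ∈ faces → t ⊆ s → t.Nonempty → t ∈ faces

namespace AbsSC

variable {α : Type}

/-- The vertex set of an abstract simplicial complex. -/
def vertexSet (K : AbsSC α) : Set α := {v | {v} ∈ K.faces}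

/-- The type of `q`-simplices (faces with `q+1` vertices). -/
def simplices (K : AbsSC α) (q : ℕ) : Type :=
  {s : Finset α // s ∈ K.faces ∧ s.card = q + 1}

/-- The space of `q`-chains over `ℤ/2`: formal sums of `q`-simplices. -/
abbrev Chain (K : AbsSC α) (q : ℕ) : Type := K.simplices q →₀ ZMod 2

/-- The sum of the `q`-dimensional faces of a `(q+1)`-simplex. -/
noncomputable def faceChain (K : AbsSC α) (q : ℕ) (s : K.simplices (q + 1)) : K.Chain q :=
  ∑ t ∈ (s.1.powersetCard (q + 1)).attach,
    Finsupp.single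
      ⟨t.1, by
        obtain ⟨hsub, hcard⟩ := Finset.mem_powersetCard.mp t.2
        refine ⟨K.down_closed s.2.1 hsub ?_, hcard⟩
        rw [← Finset.card_pos, hcard]
        omega⟩
      (1 : ZMod 2)

/-- The boundary map `∂_{q+1} : C_{q+1}(K) → C_q(K)`, sending each `(q+1)`-simplex to
the sum of its `q`-dimensional faces. -/
noncomputable def boundary (K : AbsSC α) (q : ℕ) :
    K.Chain (q + 1) →ₗ[ZMod 2] K.Chain q :=
  Finsupp.lsum (ZMod 2) fun s => LinearMap.toSpanSingleton (ZMod 2) (K.Chain q) (K.faceChain q s)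

/-- The cycle subspace: `ker ∂_q` (all of `C_0` in degree `0`). -/
noncomputable def cycles (K : AbsSC α) : (q : ℕ) → Submodule (ZMod 2) (K.Chain q)
  | 0 => ⊤
  | q + 1 => LinearMap.ker (K.boundary q)

/-- The boundaries, viewed as a submodule of the cycles. -/
noncomputable def boundariesIn (K : AbsSC α) (q : ℕ) :
    Submodule (ZMod 2) (K.cycles q) :=
  Submodule.comap (K.cycles q).subtype (LinearMap.range (K.boundary q))

/-- The `q`-th simplicial homology over `ℤ/2`: `H_q(K) = ker ∂_q / im ∂_{q+1}`. -/
def Homology (K : AbsSC α) (q : ℕ) : Type :=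
  (K.cycles q) ⧸ (K.boundariesIn q)

noncomputable instance (K : AbsSC α) (q : ℕ) : AddCommGroup (K.Homology q) :=
  inferInstanceAs (AddCommGroup ((K.cycles q) ⧸ (K.boundariesIn q)))

noncomputable instance (K : AbsSC α) (q : ℕ) : Module (ZMod 2) (K.Homology q) :=
  inferInstanceAs (Module (ZMod 2) ((K.cycles q) ⧸ (K.boundariesIn q)))

/-- The homology class of a cycle. -/
noncomputable def hClass (K : AbsSC α) (q : ℕ) (c : K.Chain q) (hc : c ∈ K.cycles q) :
    K.Homology q :=
  Submodule.Quotient.mk ⟨c, hc⟩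

/-- The chain map induced by an inclusion of simplicial complexes. -/
noncomputable def chainMap (K L : AbsSC α) (h : K.faces ⊆ L.faces) (q : ℕ) :
    K.Chain q →ₗ[ZMod 2] L.Chain q :=
  Finsupp.lmapDomain (ZMod 2) (ZMod 2) fun s : K.simplices q =>
    (⟨s.1, h s.2.1, s.2.2⟩ : L.simplices q)

/-- `θ` is the map on `q`-th homology induced by the inclusion `K ⊆ L`: it sends the
class of every cycle `c` of `K` to the class of the image chain of `c` in `L`. -/
def InducedHom (K L : AbsSC α) (q : ℕ)
    (θ : K.Homology q →ₗ[ZMod 2] L.Homology q) : Prop :=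
  ∃ h : K.faces ⊆ L.faces,
    ∀ (c : K.Chain q) (hc : c ∈ K.cycles q),
      ∃ hc' : chainMap K L h q c ∈ L.cycles q,
        θ (K.hClass q c hc) = L.hClass q (chainMap K L h q c) hc'

end AbsSC

/-- The faces of the gluing stars `S = S_1 ⊔ ⋯ ⊔ S_k`: for each `j`, the vertex `{z j}`,
the vertices `{v}` for `v ∈ P j`, and the edges `{z j, v}` for `v ∈ P j`. -/
def starFaces {α : Type} [DecidableEq α] {k : ℕ} (P : Fin k → Set α) (z : Fin k → α) :
    Set (Finset α) :=
  {s | ∃ j : Fin k, s = {z j} ∨ ∃ v ∈ P j, s = {v} ∨ s = {z j, v}}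

section Tower

variable {W : ℕ → Type} [∀ i, AddCommGroup (W i)] [∀ i, Module (ZMod 2) (W i)]

/-- The composite `φ_{i,j} = φ_{j-1} ∘ ⋯ ∘ φ_i` of the connecting maps of a tower
(the identity when `i = j`). -/
noncomputable def comps (φ : ∀ i, W i →ₗ[ZMod 2] W (i + 1)) {i j : ℕ} (h : i ≤ j) :
    W i →ₗ[ZMod 2] W j :=
  Nat.leRecOn (C := fun m => W i →ₗ[ZMod 2] W m) h (fun {m} g => (φ m).comp g) LinearMap.id

/-- `s ∈ W b` has persistence interval `(b, d)` with finite death `d ∈ {b+1, …, n}`: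
`s ∉ im φ_{b-1}`, `φ_{b,d'}(s) ∉ im φ_{b-1,d'}` for all `b ≤ d' < d`, and
`φ_{b,d}(s) ∈ im φ_{b-1,d}`. -/
def HasPersIntervalFin (φ : ∀ i, W i →ₗ[ZMod 2] W (i + 1)) (n b d : ℕ) (s : W b) : Prop :=
  ∃ (_ : 1 ≤ b) (hbd : b < d) (_ : d ≤ n),
    s ∉ LinearMap.range (comps φ (Nat.sub_le b 1)) ∧
    (∀ (d' : ℕ) (hd' : b ≤ d'), d' < d →
      comps φ hd' s ∉ LinearMap.range (comps φ (Nat.le_trans (Nat.sub_le b 1) hd'))) ∧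
    comps φ (Nat.le_of_lt hbd) s ∈
      LinearMap.range (comps φ (Nat.le_trans (Nat.sub_le b 1) (Nat.le_of_lt hbd)))

/-- `s ∈ W b` has persistence interval `(b, ∞)`: `s ∉ im φ_{b-1}` and
`φ_{b,d'}(s) ∉ im φ_{b-1,d'}` for all `b ≤ d' ≤ n`. -/
def HasPersIntervalInf (φ : ∀ i, W i →ₗ[ZMod 2] W (i + 1)) (n b : ℕ) (s : W b) : Prop :=
  ∃ _ : 1 ≤ b,
    s ∉ LinearMap.range (comps φ (Nat.sub_le b 1)) ∧
    ∀ (d' : ℕ) (hd' : b ≤ d'), d' ≤ n →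
      comps φ hd' s ∉ LinearMap.range (comps φ (Nat.le_trans (Nat.sub_le b 1) hd'))

end Tower

/-!
Every 2-simplex of `K̃_d` lies in `K_d`, hence avoids the cone points `z_j`, so a boundary in
`K̃_d` vanishes on the star edges `{z_j, v}`. A 1-cycle of `K̃_b` that bounds in `K̃_d` is
therefore supported on `K_b`: the kernel of `ψ_{b,d}` lies in `θ_b(H_1(K_b))`. If
`ψ_{b,d}(s) = ψ_{b-1,d}(t)`, then `s - ψ_{b-1,b}(t)` lies in that kernel, so
`s ∈ im θ_b + im ψ_{b-1}`.
-/

section Tower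

variable {W : ℕ → Type} [∀ i, AddCommGroup (W i)] [∀ i, Module (ZMod 2) (W i)]
  (φ : ∀ i, W i →ₗ[ZMod 2] W (i + 1))

lemma comps_self {i : ℕ} (h : i ≤ i) : comps φ h = LinearMap.id :=
  Nat.leRecOn_self _

lemma comps_succ {i m : ℕ} (h : i ≤ m) (h' : i ≤ m + 1) :
    comps φ h' = φ m ∘ₗ comps φ h :=
  Nat.leRecOn_succ h _

lemma comps_trans {i j l : ℕ} (hij : i ≤ j) (hjl : j ≤ l) (hil : i ≤ l) :
    comps φ hil = comps φ hjl ∘ₗ comps φ hij := by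
  induction l, hjl using Nat.le_induction with
  | base => rw [comps_self, LinearMap.id_comp]
  | succ m hm ih =>
    rw [comps_succ φ (hij.trans hm) hil, comps_succ φ hm (hm.trans m.le_succ),
      ih (hij.trans hm), LinearMap.comp_assoc]

lemma hasPersIntervalInf_of_ker_le {n b : ℕ} {U : Submodule (ZMod 2) (W b)} {s : W b}
    (hb : 1 ≤ b) (hker : ∀ d' (hd' : b ≤ d'), d' ≤ n → LinearMap.ker (comps φ hd') ≤ U)
    (hs : s ∉ U ⊔ LinearMap.range (comps φ (Nat.sub_le b 1))) :
    HasPersIntervalInf φ n b s := by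
  refine ⟨hb, fun hsr => hs (Submodule.mem_sup_right hsr), fun d' hd' hd'n ⟨t, ht⟩ => hs ?_⟩
  set x := comps φ (Nat.sub_le b 1) t
  rw [comps_trans φ (Nat.sub_le b 1) hd', LinearMap.comp_apply] at ht
  have hsx : s - x ∈ U := hker d' hd' hd'n (by rw [LinearMap.mem_ker, map_sub, ht, sub_self])
  exact Submodule.mem_sup.mpr ⟨s - x, hsx, x, ⟨t, rfl⟩, sub_add_cancel s x⟩

end Tower

namespace AbsSC

variable {α : Type}

section Chains

variable {K L M : AbsSC α} {q : ℕ}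

def simplexMap (h : K.faces ⊆ L.faces) (q : ℕ) (s : K.simplices q) : L.simplices q :=
  ⟨s.1, h s.2.1, s.2.2⟩

lemma simplexMap_injective (h : K.faces ⊆ L.faces) : Function.Injective (simplexMap h q) :=
  fun _ _ hst => Subtype.ext (Subtype.ext_iff.mp hst :)

lemma chainMap_eq_mapDomain (h : K.faces ⊆ L.faces) (c : K.Chain q) :
    chainMap K L h q c = c.mapDomain (simplexMap h q) :=
  rfl

lemma chainMap_apply_simplexMap (h : K.faces ⊆ L.faces) (c : K.Chain q) (e : K.simplices q) :
    chainMap K L h q c (simplexMap h q e) = c e :=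
  Finsupp.mapDomain_apply (simplexMap_injective h) c e

lemma chainMap_injective (h : K.faces ⊆ L.faces) : Function.Injective (chainMap K L h q) :=
  Finsupp.mapDomain_injective (simplexMap_injective h)

lemma chainMap_self (h : K.faces ⊆ K.faces) (c : K.Chain q) : chainMap K K h q c = c := by
  rw [chainMap_eq_mapDomain]
  exact Finsupp.mapDomain_id

lemma chainMap_chainMap (h₁ : K.faces ⊆ L.faces) (h₂ : L.faces ⊆ M.faces) (c : K.Chain q) :
    chainMap L M h₂ q (chainMap K L h₁ q c) = chainMap K M (h₁.trans h₂) q c := by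
  simp only [chainMap_eq_mapDomain, ← Finsupp.mapDomain_comp]
  rfl

lemma exists_chainMap_eq (h : K.faces ⊆ L.faces) {c : L.Chain q}
    (hc : ∀ e ∈ c.support, e.1 ∈ K.faces) : ∃ c' : K.Chain q, chainMap K L h q c' = c :=
  ⟨c.comapDomain _ (simplexMap_injective h).injOn,
    Finsupp.mapDomain_comapDomain _ (simplexMap_injective h) c
      fun e he => ⟨⟨e.1, hc e he, e.2.2⟩, rfl⟩⟩

lemma faceChain_apply_eq_zero (σ : K.simplices (q + 1)) {e : K.simplices q}
    (he : ¬ e.1 ⊆ σ.1) : K.faceChain q σ e = 0 := by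
  rw [faceChain, Finset.sum_apply']
  refine Finset.sum_eq_zero fun t _ => Finsupp.single_eq_of_ne' fun hte => he ?_
  rw [← hte]
  exact (Finset.mem_powersetCard.mp t.2).1

lemma boundary_single (σ : K.simplices (q + 1)) (m : ZMod 2) :
    K.boundary q (Finsupp.single σ m) = m • K.faceChain q σ := by
  rw [boundary, Finsupp.lsum_single, LinearMap.toSpanSingleton_apply]

lemma boundary_apply_eq_zero {v : α} (hv : ∀ σ : K.simplices (q + 1), v ∉ σ.1)
    (w : K.Chain (q + 1)) {e : K.simplices q} (he : v ∈ e.1) : K.boundary q w e = 0 := by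
  induction w using Finsupp.induction_linear with
  | zero => simp
  | add w₁ w₂ h₁ h₂ => rw [map_add, Finsupp.add_apply, h₁, h₂, add_zero]
  | single σ m =>
    rw [boundary_single, Finsupp.smul_apply,
      faceChain_apply_eq_zero σ fun hsub => hv σ (hsub he), smul_zero]

lemma chainMap_faceChain (h : K.faces ⊆ L.faces) (σ : K.simplices (q + 1)) :
    chainMap K L h q (K.faceChain q σ) = L.faceChain q (simplexMap h (q + 1) σ) := by
  rw [faceChain, map_sum, faceChain]
  exact Finset.sum_congr rfl fun _ _ => Finsupp.mapDomain_single

lemma boundary_chainMap (h : K.faces ⊆ L.faces) (c : K.Chain (q + 1)) :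
    L.boundary q (chainMap K L h (q + 1) c) = chainMap K L h q (K.boundary q c) := by
  induction c using Finsupp.induction_linear with
  | zero => simp
  | add c₁ c₂ h₁ h₂ => rw [map_add, map_add, h₁, h₂, map_add, map_add]
  | single σ m =>
    rw [chainMap_eq_mapDomain, Finsupp.mapDomain_single, boundary_single, boundary_single,
      map_smul, chainMap_faceChain]

lemma mem_cycles_of_chainMap_mem_cycles (h : K.faces ⊆ L.faces) {c : K.Chain q}
    (hc : chainMap K L h q c ∈ L.cycles q) : c ∈ K.cycles q := by
  cases q with
  | zero => trivial
  | succ q =>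
    refine LinearMap.mem_ker.mpr (chainMap_injective h ?_)
    rw [← boundary_chainMap, map_zero]
    exact LinearMap.mem_ker.mp hc

end Chains

section Homology

variable {K L M : AbsSC α} {q : ℕ}

lemma hClass_congr {c₁ c₂ : K.Chain q} (h : c₁ = c₂) (h₁ : c₁ ∈ K.cycles q)
    (h₂ : c₂ ∈ K.cycles q) : K.hClass q c₁ h₁ = K.hClass q c₂ h₂ := by
  subst h
  rfl

lemma hClass_eq_zero_iff {c : K.Chain q} (hc : c ∈ K.cycles q) :
    K.hClass q c hc = 0 ↔ c ∈ LinearMap.range (K.boundary q) :=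
  (Submodule.Quotient.mk_eq_zero _).trans Submodule.mem_comap

lemma InducedHom.id : InducedHom K K q LinearMap.id :=
  ⟨subset_rfl, fun c hc =>
    ⟨by rwa [chainMap_self], hClass_congr (chainMap_self _ c).symm _ _⟩⟩

lemma InducedHom.comp {f : K.Homology q →ₗ[ZMod 2] L.Homology q}
    {g : L.Homology q →ₗ[ZMod 2] M.Homology q} (hf : InducedHom K L q f)
    (hg : InducedHom L M q g) : InducedHom K M q (g ∘ₗ f) := by
  obtain ⟨hKL, hf⟩ := hf
  obtain ⟨hLM, hg⟩ := hg
  refine ⟨hKL.trans hLM, fun c hc => ?_⟩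
  obtain ⟨hc₁, hfc⟩ := hf c hc
  obtain ⟨hc₂, hgc⟩ := hg _ hc₁
  rw [chainMap_chainMap] at hc₂
  refine ⟨hc₂, ?_⟩
  rw [LinearMap.comp_apply, hfc, hgc]
  exact hClass_congr (chainMap_chainMap ..) _ _

lemma InducedHom.ker_le_range {θ : K.Homology q →ₗ[ZMod 2] L.Homology q}
    {f : L.Homology q →ₗ[ZMod 2] M.Homology q} (hθ : InducedHom K L q θ)
    (hf : InducedHom L M q f) {Z : Set α}
    (hL : ∀ e : L.simplices q, e.1 ∉ K.faces → ∃ v ∈ e.1, v ∈ Z)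
    (hM : ∀ σ : M.simplices (q + 1), ∀ v ∈ σ.1, v ∉ Z) :
    LinearMap.ker f ≤ LinearMap.range θ := by
  obtain ⟨hKL, hθ⟩ := hθ
  obtain ⟨hLM, hf⟩ := hf
  intro x hx
  obtain ⟨⟨c, hc⟩, rfl⟩ := Submodule.Quotient.mk_surjective _ x
  obtain ⟨hc', hfc⟩ := hf c hc
  obtain ⟨w, hw⟩ := (hClass_eq_zero_iff hc').mp (hfc ▸ LinearMap.mem_ker.mp hx)
  have hsupp : ∀ e ∈ c.support, e.1 ∈ K.faces := by
    intro e he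
    by_contra heK
    obtain ⟨v, hve, hvZ⟩ := hL e heK
    apply Finsupp.mem_support_iff.mp he
    rw [← chainMap_apply_simplexMap hLM, ← hw]
    exact boundary_apply_eq_zero (fun σ hvσ => hM σ v hvσ hvZ) w hve
  obtain ⟨c', rfl⟩ := exists_chainMap_eq hKL hsupp
  obtain ⟨_, hθc⟩ := hθ c' (mem_cycles_of_chainMap_mem_cycles hKL hc)
  exact ⟨_, hθc⟩

end Homology

lemma notMem_of_notMem_vertexSet {K : AbsSC α} {v : α} (hv : v ∉ K.vertexSet)
    {σ : Finset α} (hσ : σ ∈ K.faces) : v ∉ σ := fun hvσ =>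
  hv (K.down_closed hσ (Finset.singleton_subset_iff.mpr hvσ) (Finset.singleton_nonempty v))

lemma InducedHom.comps {L : ℕ → AbsSC α} {q : ℕ}
    {ψ : ∀ i, (L i).Homology q →ₗ[ZMod 2] (L (i + 1)).Homology q} {b j : ℕ}
    (hψ : ∀ i, b ≤ i → i < j → InducedHom (L i) (L (i + 1)) q (ψ i)) (hbj : b ≤ j) :
    InducedHom (L b) (L j) q (comps ψ hbj) := by
  induction j, hbj using Nat.le_induction with
  | base => rw [comps_self]; exact InducedHom.id
  | succ m hbm ih =>
    rw [comps_succ ψ hbm]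
    exact (ih fun i hbi him => hψ i hbi (him.trans m.lt_succ_self)).comp
      (hψ m hbm m.lt_succ_self)

end AbsSC

section Star

variable {α : Type} [DecidableEq α] {k : ℕ} {P : Fin k → Set α} {z : Fin k → α}
  {t : Finset α}

lemma card_le_two_of_mem_starFaces (ht : t ∈ starFaces P z) : t.card ≤ 2 := by
  obtain ⟨j, rfl | ⟨v, -, rfl | rfl⟩⟩ := ht
  · simp
  · simp
  · exact Finset.card_le_two

lemma exists_apex_mem_of_mem_starFaces (ht : t ∈ starFaces P z) (hc : t.card = 2) :
    ∃ j, z j ∈ t := by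
  obtain ⟨j, rfl | ⟨v, -, rfl | rfl⟩⟩ := ht
  · simp at hc
  · simp at hc
  · exact ⟨j, Finset.mem_insert_self _ _⟩

end Star

theorem stmt17_general {α : Type} [DecidableEq α] (n k : ℕ)
    (K Kt : ℕ → AbsSC α)
    (P : Fin k → Set α)
    (z : Fin k → α)
    (hznew : ∀ (j : Fin k) (i : ℕ), i ≤ n → z j ∉ (K i).vertexSet)
    (hKt : ∀ i, 1 ≤ i → i ≤ n → (Kt i).faces = (K i).faces ∪ starFaces P z)
    (ψ : ∀ i : ℕ, (Kt i).Homology 1 →ₗ[ZMod 2] (Kt (i + 1)).Homology 1)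
    (θ : ∀ i : ℕ, (K i).Homology 1 →ₗ[ZMod 2] (Kt i).Homology 1)
    (hψ : ∀ i, i < n → AbsSC.InducedHom (Kt i) (Kt (i + 1)) 1 (ψ i))
    (hθ : ∀ i, i ≤ n → AbsSC.InducedHom (K i) (Kt i) 1 (θ i))
    (b : ℕ) (hb1 : 1 ≤ b) (hbn : b ≤ n)
    (s : (Kt b).Homology 1)
    (hs : s ∉ LinearMap.range (θ b) ⊔ LinearMap.range (comps ψ (Nat.sub_le b 1))) :
    HasPersIntervalInf ψ n b s := by
  refine hasPersIntervalInf_of_ker_le ψ hb1 (fun d hbd hdn => ?_) hs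
  have hedge :
      ∀ e : (Kt b).simplices 1, e.1 ∉ (K b).faces → ∃ v ∈ e.1, v ∈ Set.range z := by
    intro e heK
    have hstar := ((hKt b hb1 hbn).subset e.2.1).resolve_left heK
    obtain ⟨j, hj⟩ := exists_apex_mem_of_mem_starFaces hstar e.2.2
    exact ⟨z j, hj, j, rfl⟩
  have htriangle : ∀ σ : (Kt d).simplices 2, ∀ v ∈ σ.1, v ∉ Set.range z := by
    rintro σ v hv ⟨j, rfl⟩
    have hσ : σ.1 ∈ (K d).faces :=
      ((hKt d (hb1.trans hbd) hdn).subset σ.2.1).resolve_right fun hstar => by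
        have := card_le_two_of_mem_starFaces hstar
        have := σ.2.2
        omega
    exact AbsSC.notMem_of_notMem_vertexSet (hznew j d hdn) hσ hv
  exact (hθ b hbn).ker_le_range
    (AbsSC.InducedHom.comps (fun i _ hid => hψ i (by omega)) hbd) hedge htriangle

/-- if `s ∈ H_1(K̃_b)` satisfies `s ∉ θ_{1,b}(H_1(K_b)) + im ψ_{b-1}`,
then `s` has persistence interval `(b, ∞)` in `H_1(K̃_•)`. -/
theorem stmt17 {α : Type} [DecidableEq α] (n k : ℕ)
    (K Kt : ℕ → AbsSC α)
    (hK0 : (K 0).faces = ∅)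
    (hKt0 : (Kt 0).faces = ∅)
    (hKmono : ∀ i, i < n → (K i).faces ⊆ (K (i + 1)).faces)
    (hKtmono : ∀ i, i < n → (Kt i).faces ⊆ (Kt (i + 1)).faces)
    (P : Fin k → Set α)
    (hPne : ∀ j, (P j).Nonempty)
    (hPdisj : Pairwise (Function.onFun Disjoint P))
    (hPunion : (⋃ j, P j) = (K 1).vertexSet)
    (z : Fin k → α)
    (hzinj : Function.Injective z)
    (hznew : ∀ (j : Fin k) (i : ℕ), i ≤ n → z j ∉ (K i).vertexSet)
    (hKt : ∀ i, 1 ≤ i → i ≤ n → (Kt i).faces = (K i).faces ∪ starFaces P z)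
    (φ : ∀ i : ℕ, (K i).Homology 1 →ₗ[ZMod 2] (K (i + 1)).Homology 1)
    (ψ : ∀ i : ℕ, (Kt i).Homology 1 →ₗ[ZMod 2] (Kt (i + 1)).Homology 1)
    (θ : ∀ i : ℕ, (K i).Homology 1 →ₗ[ZMod 2] (Kt i).Homology 1)
    (hφ : ∀ i, i < n → AbsSC.InducedHom (K i) (K (i + 1)) 1 (φ i))
    (hψ : ∀ i, i < n → AbsSC.InducedHom (Kt i) (Kt (i + 1)) 1 (ψ i))
    (hθ : ∀ i, i ≤ n → AbsSC.InducedHom (K i) (Kt i) 1 (θ i))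
    (hsq : ∀ i, i < n → (θ (i + 1)).comp (φ i) = (ψ i).comp (θ i))
    (b : ℕ) (hb1 : 1 ≤ b) (hbn : b ≤ n)
    (s : (Kt b).Homology 1)
    (hs : s ∉ LinearMap.range (θ b) ⊔ LinearMap.range (comps ψ (Nat.sub_le b 1))) :
    HasPersIntervalInf ψ n b s :=
  stmt17_general n k K Kt P z hznew hKt ψ θ hψ hθ b hb1 hbn s hs
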